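/- arXiv:1704.02604 — 2 statements merged into one kernel-verified Lean document; each statement's English description precedes it below -/
import Mathlib

section
/- Let k ≥ 3 be an integer and let j be an integer with 2 ≤ j ≤ k-1. Let 0 ≤ a < b ≤ 1. If b ≤ (k-j)/k, or if a ≥ j/k, then the Hausdorff dimension of W_k(a,b) is at least (log j)/(log k). -/
open scoped ENNReal

/-- The `k`-transformation `x ↦ k·x mod 1`. -/
noncomputable def Tmap (k : ℕ) (x : ℝ) : ℝ := Int.fract ((k : ℝ) * x)

/-- The survivor set of the `k`-transformation with hole `(a,b)`. -/
def W (k : ℕ) (a b : ℝ) : Set ℝ :=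
  {x | x ∈ Set.Ico (0 : ℝ) 1 ∧ ∀ n : ℕ, (Tmap k)^[n] x ∉ Set.Ioo a b}

/-- The generalized Cantor set `C_k`. -/
def Ck (k : ℕ) : Set ℝ :=
  {x | ∃ a : ℕ → ℕ, (∀ n, a n = 0 ∨ a n = k - 1) ∧
    x = ∑' n : ℕ, (a n : ℝ) / (k : ℝ) ^ (n + 1)}

/-- The `n`-th `k`-ary digit of `x`. -/
noncomputable def digit (k : ℕ) (n : ℕ) (x : ℝ) : ℤ :=
  ⌊(k : ℝ) ^ (n + 1) * x⌋ % (k : ℤ)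

open Classical in
/-- The generalized Cantor function `g_k`. -/
noncomputable def gk (k : ℕ) (x : ℝ) : ℝ :=
  if x = 1 then 1
  else if ∀ n, digit k n x = 0 ∨ digit k n x = (k : ℤ) - 1 then
    ∑' n : ℕ, (digit k n x : ℝ) / (((k : ℝ) - 1) * 2 ^ (n + 1))
  else
    (∑ n ∈ Finset.range (sInf {n : ℕ | ¬(digit k n x = 0 ∨ digit k n x = (k : ℤ) - 1)}),
      (digit k n x : ℝ) / (((k : ℝ) - 1) * 2 ^ (n + 1))) +
    1 / 2 ^ (sInf {n : ℕ | ¬(digit k n x = 0 ∨ digit k n x = (k : ℤ) - 1)} + 1)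

/-- The Thue–Morse sequence: parity of the number of 1s in the binary expansion. -/
def tm (n : ℕ) : ℕ := (Nat.digits 2 n).sum % 2

/-!
For `d + j ≤ k` let `S` be the set of reals whose base-`k` digits all lie in the window
`{d, …, d + j - 1}`. It lies in `[d/k, (d + j)/k]` and `T_k` maps `S ∪ {0}` into itself, so for
`d = k - j`, resp. `d = 0`, the orbits of points of `S \ {1}` avoid the hole and
`S \ {1} ⊆ W_k(a,b)`. Reading the shifted digits `ωₙ - d` in base `j` maps `S` onto `[0, 1]`,
and this map is Hölder of exponent `log j / log k`: if the digits of two points of `S` first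
differ at position `n`, the points are at least `k^-(n+2)` apart, because `j < k` leaves a gap
between the windows, while their images are at most `j^-n` apart. A Hölder map of exponent `r`
divides dimension by at most `r`.
-/

open Set Real
open scoped NNReal

theorem dimH_range_le_div_of_dist_le_rpow {α X Y : Type*} [MetricSpace X] [MetricSpace Y]
    {f : α → X} {g : α → Y} {C r : ℝ≥0} (hr : 0 < r)
    (h : ∀ a b, dist (g a) (g b) ≤ C * dist (f a) (f b) ^ (r : ℝ)) :
    dimH (range g) ≤ dimH (range f) / r := by
  have hψ : HolderWith C r (g ∘ rangeSplitting f) := fun x y ↦ by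
    have := h (rangeSplitting f x) (rangeSplitting f y)
    rw [apply_rangeSplitting f, apply_rangeSplitting f] at this
    rw [edist_nndist, edist_nndist, ← ENNReal.coe_rpow_of_nonneg _ r.coe_nonneg, ← ENNReal.coe_mul,
      ENNReal.coe_le_coe, ← NNReal.coe_le_coe]
    exact this
  have hrange : range (g ∘ rangeSplitting f) = range g := by
    refine (range_comp_subset_range _ _).antisymm ?_
    rintro _ ⟨a, rfl⟩
    refine ⟨⟨f a, a, rfl⟩, dist_le_zero.1 ?_⟩
    have := h (rangeSplitting f ⟨f a, a, rfl⟩) a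
    rwa [apply_rangeSplitting f, dist_self, Real.zero_rpow (by positivity), mul_zero] at this
  calc dimH (range g) = dimH (range (g ∘ rangeSplitting f)) := by rw [hrange]
    _ ≤ dimH (univ : Set (range f)) / r := hψ.dimH_range_le hr
    _ = dimH (range f) / r := by
      rw [← isometry_subtype_coe.dimH_image, Subtype.coe_image_univ]

theorem dimH_diff_singleton {X : Type*} [EMetricSpace X] (s : Set X) (x : X) :
    dimH (s \ {x}) = dimH s := by
  refine (dimH_mono sdiff_subset).antisymm ?_
  calc dimH s ≤ dimH (s \ {x} ∪ {x}) := dimH_mono (by simp)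
    _ = dimH (s \ {x}) := by rw [dimH_union, dimH_singleton, max_eq_left zero_le]

theorem abs_tsum_mul_inv_pow_le {b M : ℝ} (hb : 1 < b) {c : ℕ → ℝ} (hc : ∀ i, |c i| ≤ M) :
    |∑' i, c i * (b ^ (i + 1))⁻¹| ≤ M / (b - 1) := by
  have hgeom : HasSum (fun i : ℕ ↦ M * b⁻¹ * b⁻¹ ^ i) (M * b⁻¹ * (1 - b⁻¹)⁻¹) :=
    (hasSum_geometric_of_lt_one (by positivity) (inv_lt_one_of_one_lt₀ hb)).mul_left _
  have hsum : M * b⁻¹ * (1 - b⁻¹)⁻¹ = M / (b - 1) := by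
    have : b - 1 ≠ 0 := by linarith
    field_simp
  rw [← hsum, ← Real.norm_eq_abs]
  refine tsum_of_norm_bounded hgeom fun i ↦ ?_
  rw [norm_mul, norm_inv, norm_pow, Real.norm_eq_abs, Real.norm_eq_abs,
    abs_of_pos (by linarith : 0 < b), pow_succ, mul_inv, inv_pow]
  exact (mul_le_mul_of_nonneg_right (hc i) (by positivity)).trans_eq (by ring)

namespace Real

theorem mul_ofDigits {b : ℕ} (x : ℕ → Fin b) :
    (b : ℝ) * ofDigits x = x 0 + ofDigits (fun i ↦ x (i + 1)) := by
  have hb : (b : ℝ) ≠ 0 := by have := Fin.pos (x 0); positivity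
  rw [ofDigits_eq_sum_add_ofDigits x 1]
  simp only [Finset.range_one, Finset.sum_singleton, ofDigitsTerm, zero_add, pow_one]
  field_simp

theorem div_le_ofDigits {b : ℕ} (x : ℕ → Fin b) : (x 0 : ℝ) / b ≤ ofDigits x := by
  have hb : (0 : ℝ) < b := by have := Fin.pos (x 0); positivity
  rw [div_le_iff₀ hb, mul_comm, mul_ofDigits]
  linarith [ofDigits_nonneg (fun i ↦ x (i + 1))]

theorem ofDigits_le_div {b : ℕ} (x : ℕ → Fin b) : ofDigits x ≤ ((x 0 : ℝ) + 1) / b := by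
  have hb : (0 : ℝ) < b := by have := Fin.pos (x 0); positivity
  rw [le_div_iff₀ hb, mul_comm, mul_ofDigits]
  linarith [ofDigits_le_one (fun i ↦ x (i + 1))]

theorem abs_ofDigits_sub_ofDigits_le_div {b : ℕ} (hb : 1 < b) {x y : ℕ → Fin b} {M : ℝ}
    (h : ∀ i, |(x i : ℝ) - y i| ≤ M) : |ofDigits x - ofDigits y| ≤ M / (b - 1) := by
  rw [ofDigits, ofDigits, ← summable_ofDigitsTerm.tsum_sub summable_ofDigitsTerm]
  simp only [ofDigitsTerm, ← sub_mul]
  exact abs_tsum_mul_inv_pow_le (by exact_mod_cast hb) h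

theorem inv_pow_le_abs_ofDigits_sub_ofDigits {b : ℕ} {x y : ℕ → Fin b} {n : ℕ}
    (hxy : ∀ i < n, x i = y i) (hn : x n ≠ y n) (h : ∀ i, |(x i : ℝ) - y i| ≤ b - 2) :
    ((b : ℝ) ^ (n + 2))⁻¹ ≤ |ofDigits x - ofDigits y| := by
  have hdigit : (1 : ℝ) ≤ |(x n : ℝ) - y n| := by
    have : ((x n : ℕ) : ℤ) - (y n : ℕ) ≠ 0 :=
      sub_ne_zero.2 (by exact_mod_cast Fin.val_ne_of_ne hn)
    exact_mod_cast Int.one_le_abs this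
  have hb : (1 : ℝ) < b := by linarith [h n]
  set t := ofDigits (fun i ↦ x (i + (n + 1))) - ofDigits (fun i ↦ y (i + (n + 1)))
  have ht : |t| ≤ (b - 2) / (b - 1) :=
    abs_ofDigits_sub_ofDigits_le_div (by exact_mod_cast hb) fun i ↦ h (i + (n + 1))
  have hsplit : ofDigits x - ofDigits y = ((b : ℝ) ^ (n + 1))⁻¹ * ((x n - y n : ℝ) + t) := by
    rw [ofDigits_eq_sum_add_ofDigits x (n + 1), ofDigits_eq_sum_add_ofDigits y (n + 1),
      Finset.sum_range_succ, Finset.sum_range_succ,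
      Finset.sum_congr rfl fun i hi ↦ by rw [ofDigitsTerm, hxy i (Finset.mem_range.1 hi)]]
    simp only [t, ofDigitsTerm]
    ring
  -- the tail digits can cancel at most `(b - 2) / (b - 1) ≤ 1 - b⁻¹` of the leading gap `1`
  have hgap : (b - 2) / (b - 1) ≤ 1 - (b : ℝ)⁻¹ := by
    rw [div_le_iff₀ (by linarith)]
    have := mul_inv_cancel₀ (by positivity : (b : ℝ) ≠ 0)
    nlinarith
  have hlow : (b : ℝ)⁻¹ ≤ |(x n - y n : ℝ) + t| := by
    have := abs_sub_abs_le_abs_sub (x n - y n : ℝ) (-t)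
    rw [abs_neg, sub_neg_eq_add] at this
    linarith
  rw [hsplit, abs_mul, abs_of_pos (by positivity), pow_succ _ (n + 1), mul_inv]
  exact mul_le_mul_of_nonneg_left hlow (by positivity)

end Real

theorem Tmap_ofDigits {k : ℕ} (x : ℕ → Fin k) :
    Tmap k (ofDigits x) = Int.fract (ofDigits fun i ↦ x (i + 1)) := by
  rw [Tmap, mul_ofDigits, Int.fract_natCast_add]

theorem inter_Ico_subset_W {k : ℕ} {a b : ℝ} {A : Set ℝ} (hA : MapsTo (Tmap k) A A)
    (hhole : Disjoint A (Ioo a b)) : A ∩ Ico 0 1 ⊆ W k a b :=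
  fun _ ⟨hxA, hx⟩ ↦ ⟨hx, fun n ↦ disjoint_left.1 hhole (hA.iterate n hxA)⟩

section DigitWindow

variable {j k : ℕ}

def offsetDigits (d : ℕ) (hd : d + j ≤ k) (ω : ℕ → Fin j) : ℕ → Fin k :=
  fun i ↦ ⟨d + ω i, by omega⟩

/-- The reals in `[0, 1]` having a base-`k` expansion with all digits in `{d, …, d + j - 1}`. -/
def digitWindowSet (d : ℕ) (hd : d + j ≤ k) : Set ℝ :=
  range fun ω ↦ ofDigits (offsetDigits d hd ω)

theorem digitWindowSet_subset_Icc (d : ℕ) (hd : d + j ≤ k) :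
    digitWindowSet d hd ⊆ Icc ((d : ℝ) / k) (((d : ℝ) + j) / k) := by
  rintro _ ⟨ω, rfl⟩
  have hω : ((ω 0 : ℕ) : ℝ) + 1 ≤ j := by exact_mod_cast (ω 0).isLt
  constructor
  · refine le_trans ?_ (div_le_ofDigits _)
    gcongr
    simp [offsetDigits]
  · refine (ofDigits_le_div _).trans ?_
    gcongr ?_ / _
    push_cast [offsetDigits]
    linarith

theorem mapsTo_Tmap_insert_zero_digitWindowSet (d : ℕ) (hd : d + j ≤ k) :
    MapsTo (Tmap k) (insert 0 (digitWindowSet d hd)) (insert 0 (digitWindowSet d hd)) := by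
  rintro _ (rfl | ⟨ω, rfl⟩)
  · simp [Tmap]
  rw [Tmap_ofDigits]
  obtain hlt | heq := (ofDigits_le_one fun i ↦ offsetDigits d hd ω (i + 1)).lt_or_eq
  · rw [Int.fract_eq_self.2 ⟨ofDigits_nonneg _, hlt⟩]
    exact mem_insert_of_mem _ ⟨fun i ↦ ω (i + 1), rfl⟩
  · rw [heq, Int.fract_one]
    exact mem_insert _ _

theorem abs_offsetDigits_sub_offsetDigits_le (hjk : j < k) {d : ℕ} (hd : d + j ≤ k)
    (ω ω' : ℕ → Fin j) (i : ℕ) :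
    |((offsetDigits d hd ω i : ℕ) : ℝ) - (offsetDigits d hd ω' i : ℕ)| ≤ k - 2 := by
  have h1 : ((ω i : ℕ) : ℝ) + 1 ≤ j := by exact_mod_cast (ω i).isLt
  have h2 : ((ω' i : ℕ) : ℝ) + 1 ≤ j := by exact_mod_cast (ω' i).isLt
  have h3 : (j : ℝ) + 1 ≤ k := by exact_mod_cast hjk
  simp only [offsetDigits, Nat.cast_add, add_sub_add_left_eq_sub]
  exact abs_sub_le_of_nonneg_of_le (by positivity) (by linarith) (by positivity) (by linarith)

theorem abs_ofDigits_sub_ofDigits_le_rpow (hjk : j < k) {d : ℕ} (hd : d + j ≤ k)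
    (ω ω' : ℕ → Fin j) :
    |ofDigits ω - ofDigits ω'| ≤
      (j : ℝ) ^ 2 *
        |ofDigits (offsetDigits d hd ω) - ofDigits (offsetDigits d hd ω')| ^ logb k j := by
  obtain rfl | hne := eq_or_ne ω ω'
  · simp only [sub_self, abs_zero]
    positivity
  classical
  have hex := Function.ne_iff.1 hne
  set n := Nat.find hex
  have hn : ω n ≠ ω' n := Nat.find_spec hex
  have hxy : ∀ i < n, ω i = ω' i := fun i hi ↦ not_not.1 (Nat.find_min hex hi)
  have hj : (1 : ℝ) ≤ j := by exact_mod_cast Fin.pos (ω 0)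
  have hk : (1 : ℝ) < k := by have := Fin.pos (ω 0); exact_mod_cast (by omega : 1 < k)
  have hsep := inv_pow_le_abs_ofDigits_sub_ofDigits (n := n)
    (fun i hi ↦ by simp [offsetDigits, hxy i hi]) (by simpa [offsetDigits, Fin.ext_iff] using hn)
    (abs_offsetDigits_sub_offsetDigits_le hjk hd ω ω')
  have hpow : (((k : ℝ) ^ (n + 2))⁻¹) ^ logb k j = ((j : ℝ) ^ (n + 2))⁻¹ := by
    rw [inv_rpow (by positivity), ← rpow_pow_comm (by positivity),
      rpow_logb (by positivity) hk.ne' (by positivity)]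
  calc |ofDigits ω - ofDigits ω'| ≤ ((j : ℝ) ^ n)⁻¹ := abs_ofDigits_sub_ofDigits_le hxy
    _ = (j : ℝ) ^ 2 * (((k : ℝ) ^ (n + 2))⁻¹) ^ logb k j := by
      rw [hpow, pow_add, mul_inv, mul_left_comm, mul_inv_cancel₀ (by positivity), mul_one]
    _ ≤ _ := mul_le_mul_of_nonneg_left
      (rpow_le_rpow (by positivity) hsep (logb_nonneg hk hj)) (by positivity)

theorem le_dimH_digitWindowSet (hj : 2 ≤ j) (hjk : j < k) {d : ℕ} (hd : d + j ≤ k) :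
    ENNReal.ofReal (logb k j) ≤ dimH (digitWindowSet d hd) := by
  have hr : 0 < logb k j := logb_pos (by exact_mod_cast (by omega : 1 < k)) (by exact_mod_cast hj)
  have hdim :
      dimH (range (ofDigits (b := j))) ≤ dimH (digitWindowSet d hd) / (logb k j).toNNReal :=
    dimH_range_le_div_of_dist_le_rpow (C := (j : ℝ≥0) ^ 2) (toNNReal_pos.2 hr) fun ω ω' ↦ by
      rw [dist_eq, dist_eq, coe_toNNReal _ hr.le]
      push_cast
      exact abs_ofDigits_sub_ofDigits_le_rpow hjk hd ω ω'
  have hIcc : Icc (0 : ℝ) 1 ⊆ range (ofDigits (b := j)) := by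
    simpa using (ofDigits_SurjOn (by omega : 1 < j)).subset_range
  have hone : (1 : ℝ≥0∞) ≤ dimH (range (ofDigits (b := j))) := by
    have := Real.dimH_of_nonempty_interior (s := Icc (0 : ℝ) 1) (by simp)
    rw [Module.finrank_self, Nat.cast_one] at this
    exact this ▸ dimH_mono hIcc
  have := hone.trans hdim
  rwa [ENNReal.le_div_iff_mul_le (by simp [hr]) (by simp), one_mul] at this

theorem le_dimH_W (hj : 2 ≤ j) (hjk : j < k) {d : ℕ} (hd : d + j ≤ k) {a b : ℝ} (ha : 0 ≤ a)
    (hhole : b ≤ d / k ∨ ((d : ℝ) + j) / k ≤ a) :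
    ENNReal.ofReal (logb k j) ≤ dimH (W k a b) := by
  have hdisj : Disjoint (insert 0 (digitWindowSet d hd)) (Ioo a b) := by
    rw [disjoint_left]
    rintro x (rfl | hx) ⟨hax, hxb⟩
    · linarith
    · have := digitWindowSet_subset_Icc d hd hx
      rcases hhole with h | h <;> linarith [this.1, this.2]
  have hsub : digitWindowSet d hd \ {1} ⊆ insert 0 (digitWindowSet d hd) ∩ Ico 0 1 := by
    rintro _ ⟨⟨ω, rfl⟩, hne⟩
    exact ⟨mem_insert_of_mem _ ⟨ω, rfl⟩, ofDigits_nonneg _, (ofDigits_le_one _).lt_of_ne hne⟩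
  calc ENNReal.ofReal (logb k j) ≤ dimH (digitWindowSet d hd) := le_dimH_digitWindowSet hj hjk hd
    _ = dimH (digitWindowSet d hd \ {1}) := (dimH_diff_singleton _ _).symm
    _ ≤ dimH (W k a b) := dimH_mono <|
      hsub.trans (inter_Ico_subset_W (mapsTo_Tmap_insert_zero_digitWindowSet d hd) hdisj)

end DigitWindow

theorem stmt4_general (k j : ℕ) (hj : 2 ≤ j) (hjk : j ≤ k - 1)
    (a b : ℝ) (ha : 0 ≤ a)
    (h : b ≤ ((k : ℝ) - (j : ℝ)) / k ∨ (j : ℝ) / k ≤ a) :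
    ENNReal.ofReal (Real.log j / Real.log k) ≤ dimH (W k a b) := by
  have hjk' : j < k := by omega
  rw [log_div_log]
  rcases h with hb | ha'
  · refine le_dimH_W hj hjk' (d := k - j) (by omega) ha (Or.inl ?_)
    rwa [Nat.cast_sub hjk'.le]
  · exact le_dimH_W hj hjk' (d := 0) (by omega) ha (Or.inr (by simpa using ha'))

/-- if `b ≤ (k-j)/k` or `a ≥ j/k`, then `dimH W_k(a,b) ≥ log j / log k`. -/
theorem stmt4 (k j : ℕ) (hk : 3 ≤ k) (hj : 2 ≤ j) (hjk : j ≤ k - 1)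
    (a b : ℝ) (ha : 0 ≤ a) (hab : a < b) (hb : b ≤ 1)
    (h : b ≤ ((k : ℝ) - (j : ℝ)) / k ∨ (j : ℝ) / k ≤ a) :
    ENNReal.ofReal (Real.log j / Real.log k) ≤ dimH (W k a b) :=
  stmt4_general k j hj hjk a b ha h
end

section
/- Let k ≥ 3 be an integer. At every point x ∈ [0,1) with x ∉ C_k, the generalized Cantor function g_k is differentiable with derivative 0 (i.e., g_k has derivative 0 at x). -/
open scoped ENNReal

/-!
Let `N` be the first position at which `x` has a digit outside `{0, k-1}` (it exists since
`x ∉ C_k`). Then `g_k y` depends only on the first `N` digits of `y` as long as the `N`-th digit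
of `y` is also outside `{0, k-1}`, and these digits are read off `⌊k^(N+1) y⌋`. This floor is
constant on a right neighbourhood of `x`, and also on a left one unless `x = m / k^(N+1)`. In that
case the `N`-th digit `m % k` is not `1`, since otherwise `x = 0.d₀…d_{N-1}0(k-1)(k-1)… ∈ C_k`;
so it lies in `[2, k-2]`, and just left of `x` the floor is `m - 1`, which keeps the first `N`
digits and lowers the `N`-th one by one, still outside `{0, k-1}`. Hence `g_k` is locally constant
at `x`.
-/

open Filter Set Topology

section

variable {k : ℕ}

def IsCantorDigit (k : ℕ) (d : ℤ) : Prop := d = 0 ∨ d = (k : ℤ) - 1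

lemma ofDigits_mem_Ck (d : ℕ → Fin k) (hd : ∀ n, (d n : ℕ) = 0 ∨ (d n : ℕ) = k - 1) :
    Real.ofDigits d ∈ Ck k :=
  ⟨fun n => d n, hd, by simp [Real.ofDigits, Real.ofDigitsTerm, div_eq_mul_inv]⟩

lemma natCast_digits_eq_digit [NeZero k] {x : ℝ} (hx : 0 ≤ x) (n : ℕ) :
    ((Real.digits x k n : ℕ) : ℤ) = digit k n x := by
  rw [Real.digits, Fin.val_ofNat, Int.natCast_mod, Int.natCast_floor_eq_floor (by positivity),
    digit, mul_comm]

lemma mem_Ck_of_forall_isCantorDigit (hk : 1 < k) {x : ℝ} (hx : x ∈ Ico 0 1)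
    (h : ∀ n, IsCantorDigit k (digit k n x)) : x ∈ Ck k := by
  have : NeZero k := ⟨by omega⟩
  rw [← Real.ofDigits_digits hk hx]
  refine ofDigits_mem_Ck _ fun n => ?_
  have := natCast_digits_eq_digit (k := k) hx.1 n
  rcases h n with h | h <;> omega

/-- A terminating expansion `0.d₀…d_{N-1}1` with Cantor digits `dₙ` also equals
`0.d₀…d_{N-1}0(k-1)(k-1)…`. -/
lemma mem_Ck_of_digit_eq_one (hk : 1 < k) {x : ℝ} (hx : x ∈ Ico 0 1) {N : ℕ}
    (hgood : ∀ n < N, IsCantorDigit k (digit k n x))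
    (hint : (⌊(k : ℝ) ^ (N + 1) * x⌋ : ℝ) = (k : ℝ) ^ (N + 1) * x) (hone : digit k N x = 1) :
    x ∈ Ck k := by
  have : NeZero k := ⟨by omega⟩
  let d : ℕ → Fin k := fun n =>
    if n < N then Real.digits x k n else if n = N then 0 else ⟨k - 1, by omega⟩
  have hdigit := natCast_digits_eq_digit (k := k) hx.1
  have hd : ∀ n, (d n : ℕ) = 0 ∨ (d n : ℕ) = k - 1 := fun n => by
    by_cases hn : n < N
    · have := hdigit n
      rcases hgood n hn with h | h <;> simp only [d, if_pos hn] <;> omega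
    · by_cases hN : n = N <;> simp [d, hn, hN]
  have hsum : ∑ n ∈ Finset.range (N + 1), Real.ofDigitsTerm (Real.digits x k) n = x := by
    have h := Real.ofDigits_digits_sum_eq (b := k) hx (N + 1)
    rw [natCast_floor_eq_intCast_floor (by have := hx.1; positivity), hint] at h
    exact mul_left_cancel₀ (by positivity) h
  have htail : Real.ofDigits (fun n => d (n + (N + 1))) = 1 := by
    convert Real.ofDigits_const_last_eq_one' hk using 3 with n
    simp [d, show ¬ n + (N + 1) < N by omega, show n + (N + 1) ≠ N by omega]
  have hlast : (Real.digits x k N : ℝ) = 1 := by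
    exact_mod_cast (hdigit N).trans hone
  convert ofDigits_mem_Ck d hd
  rw [Real.ofDigits_eq_sum_add_ofDigits d (N + 1), htail, ← hsum, Finset.sum_range_succ,
    Finset.sum_range_succ]
  have hhead : ∀ n ∈ Finset.range N,
      Real.ofDigitsTerm (Real.digits x k) n = Real.ofDigitsTerm d n := fun n hn => by
    simp [d, Real.ofDigitsTerm, Finset.mem_range.1 hn]
  rw [Finset.sum_congr rfl hhead, add_assoc]
  congr 1
  simp [Real.ofDigitsTerm, d, hlast]

lemma floor_pow_add_mul_ediv (hk : k ≠ 0) (a b : ℕ) (y : ℝ) :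
    ⌊(k : ℝ) ^ (a + b) * y⌋ / (k : ℤ) ^ b = ⌊(k : ℝ) ^ a * y⌋ := by
  have h : (k : ℝ) ^ a * y = (k : ℝ) ^ (a + b) * y / ((k ^ b : ℕ) : ℝ) := by
    push_cast
    field_simp
    ring
  rw [h, Int.floor_div_natCast]
  push_cast
  rfl

lemma digit_eq_of_floor_eq (hk : k ≠ 0) {x y : ℝ} {M n : ℕ} (hn : n < M)
    (h : ⌊(k : ℝ) ^ M * y⌋ = ⌊(k : ℝ) ^ M * x⌋) : digit k n y = digit k n x := by
  obtain ⟨j, rfl⟩ := Nat.exists_eq_add_of_lt hn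
  rw [digit, digit, ← floor_pow_add_mul_ediv hk (n + 1) j, ← floor_pow_add_mul_ediv hk (n + 1) j,
    show n + 1 + j = n + j + 1 by omega, h]

lemma floor_mul_eq_iff {K y : ℝ} {j : ℤ} (hK : 0 < K) :
    ⌊K * y⌋ = j ↔ y ∈ Ico (j / K) ((j + 1) / K) := by
  rw [Int.floor_eq_iff, mem_Ico, div_le_iff₀' hK, lt_div_iff₀' hK]

lemma gk_eq_of_first_non_cantor_digit {x : ℝ} (hx : x ≠ 1) {N : ℕ}
    (hgood : ∀ n < N, IsCantorDigit k (digit k n x)) (hbad : ¬ IsCantorDigit k (digit k N x)) :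
    gk k x = ∑ n ∈ Finset.range N, (digit k n x : ℝ) / (((k : ℝ) - 1) * 2 ^ (n + 1)) +
      1 / 2 ^ (N + 1) := by
  unfold IsCantorDigit at hgood hbad
  have hN : sInf {n : ℕ | ¬(digit k n x = 0 ∨ digit k n x = (k : ℤ) - 1)} = N :=
    le_antisymm (Nat.sInf_le hbad) (le_csInf ⟨N, hbad⟩ fun n hn => not_lt.1 fun h => hn (hgood n h))
  rw [gk, if_neg hx, if_neg fun h => hbad (h N), hN]

lemma gk_eq_of_digits_eq {x y : ℝ} (hx : x ≠ 1) (hy : y ≠ 1) {N : ℕ}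
    (hgood : ∀ n < N, IsCantorDigit k (digit k n x)) (hbad : ¬ IsCantorDigit k (digit k N x))
    (hdigit : ∀ n < N, digit k n y = digit k n x) (hbad' : ¬ IsCantorDigit k (digit k N y)) :
    gk k y = gk k x := by
  rw [gk_eq_of_first_non_cantor_digit hx hgood hbad,
    gk_eq_of_first_non_cantor_digit hy (fun n hn => hdigit n hn ▸ hgood n hn) hbad']
  congr 1
  exact Finset.sum_congr rfl fun n hn => by rw [hdigit n (Finset.mem_range.1 hn)]

lemma gk_eq_of_floor_eq (hk : k ≠ 0) {x y : ℝ} (hx : x ≠ 1) (hy : y ≠ 1) {N : ℕ}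
    (hgood : ∀ n < N, IsCantorDigit k (digit k n x)) (hbad : ¬ IsCantorDigit k (digit k N x))
    (h : ⌊(k : ℝ) ^ (N + 1) * y⌋ = ⌊(k : ℝ) ^ (N + 1) * x⌋) : gk k y = gk k x := by
  have hdigit : ∀ n < N + 1, digit k n y = digit k n x := fun n hn => digit_eq_of_floor_eq hk hn h
  exact gk_eq_of_digits_eq hx hy hgood hbad (fun n hn => hdigit n (by omega))
    (hdigit N N.lt_succ_self ▸ hbad)

lemma gk_eq_of_floor_eq_sub_one (hk : k ≠ 0) {x y : ℝ} (hx : x ≠ 1) (hy : y ≠ 1) {N : ℕ}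
    (hgood : ∀ n < N, IsCantorDigit k (digit k n x)) (hbad : ¬ IsCantorDigit k (digit k N x))
    (hone : digit k N x ≠ 1)
    (h : ⌊(k : ℝ) ^ (N + 1) * y⌋ = ⌊(k : ℝ) ^ (N + 1) * x⌋ - 1) : gk k y = gk k x := by
  set m := ⌊(k : ℝ) ^ (N + 1) * x⌋
  have hk' : (0 : ℤ) < k := by omega
  have hr : 2 ≤ m % k ∧ m % k ≤ k - 2 := by
    have hm : digit k N x = m % k := rfl
    have hm0 := Int.emod_nonneg m hk'.ne'
    have hmk := Int.emod_lt_of_pos m hk'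
    unfold IsCantorDigit at hbad
    omega
  obtain ⟨hdiv, hmod⟩ := (Int.ediv_emod_unique (a := m - 1) (q := m / k) (r := m % k - 1) hk').2
    ⟨by linarith [Int.emod_add_mul_ediv m k], by omega, by omega⟩
  have hfloor : ⌊(k : ℝ) ^ N * y⌋ = ⌊(k : ℝ) ^ N * x⌋ := by
    rw [← floor_pow_add_mul_ediv hk N 1, ← floor_pow_add_mul_ediv hk N 1, pow_one, h, hdiv]
  have hN : digit k N y = m % k - 1 := by rw [digit, h, hmod]
  refine gk_eq_of_digits_eq hx hy hgood hbad (fun n hn => digit_eq_of_floor_eq hk hn hfloor) ?_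
  unfold IsCantorDigit
  omega

lemma exists_first_non_cantor_digit (hk : 1 < k) {x : ℝ} (hx : x ∈ Ico 0 1) (hxC : x ∉ Ck k) :
    ∃ N, (∀ n < N, IsCantorDigit k (digit k n x)) ∧ ¬ IsCantorDigit k (digit k N x) := by
  classical
  have h : ∃ n, ¬ IsCantorDigit k (digit k n x) := by
    by_contra! h
    exact hxC (mem_Ck_of_forall_isCantorDigit hk hx h)
  exact ⟨Nat.find h, fun n hn => not_not.1 (Nat.find_min h hn), Nat.find_spec h⟩

lemma gk_eventuallyEq_nhds (hk : 1 < k) {x : ℝ} (hx : x ∈ Ico 0 1) (hxC : x ∉ Ck k) :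
    gk k =ᶠ[𝓝 x] fun _ => gk k x := by
  obtain ⟨N, hgood, hbad⟩ := exists_first_non_cantor_digit hk hx hxC
  have hk0 : k ≠ 0 := by omega
  set K : ℝ := (k : ℝ) ^ (N + 1)
  have hK : 0 < K := by positivity
  set m := ⌊K * x⌋
  have hxm : x ∈ Ico (m / K) ((m + 1) / K) := (floor_mul_eq_iff hK).1 rfl
  have hne : ∀ᶠ y in 𝓝 x, y ≠ 1 := eventually_ne_nhds hx.2.ne
  rw [EventuallyEq, ← nhdsLT_sup_nhdsGE, eventually_sup]
  refine ⟨?_, ?_⟩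
  · rcases hxm.1.lt_or_eq with hlt | heq
    · filter_upwards [nhdsWithin_le_nhds hne, Ioo_mem_nhdsLT hlt] with y hy1 hy
      exact gk_eq_of_floor_eq hk0 hx.2.ne hy1 hgood hbad
        ((floor_mul_eq_iff hK).2 ⟨hy.1.le, hy.2.trans hxm.2⟩)
    · have hint : (m : ℝ) = K * x := by rw [← heq]; field_simp
      have hone : digit k N x ≠ 1 := fun h => hxC (mem_Ck_of_digit_eq_one hk hx hgood hint h)
      have hlt : ((m - 1 : ℤ) : ℝ) / K < x := by
        rw [← heq]; push_cast; gcongr; linarith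
      filter_upwards [nhdsWithin_le_nhds hne, Ioo_mem_nhdsLT hlt] with y hy1 hy
      refine gk_eq_of_floor_eq_sub_one hk0 hx.2.ne hy1 hgood hbad hone
        ((floor_mul_eq_iff hK).2 ⟨hy.1.le, ?_⟩)
      simpa using hy.2.trans_eq heq.symm
  · filter_upwards [nhdsWithin_le_nhds hne, Ico_mem_nhdsGE hxm.2] with y hy1 hy
    exact gk_eq_of_floor_eq hk0 hx.2.ne hy1 hgood hbad
      ((floor_mul_eq_iff hK).2 ⟨hxm.1.trans hy.1, hy.2⟩)

end

/-- `g_k` has derivative `0` at every point of `[0,1) \ C_k`. -/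
theorem stmt9 (k : ℕ) (hk : 3 ≤ k) (x : ℝ) (hx : x ∈ Set.Ico (0 : ℝ) 1)
    (hxC : x ∉ Ck k) :
    HasDerivAt (gk k) 0 x :=
  (hasDerivAt_const x (gk k x)).congr_of_eventuallyEq (gk_eventuallyEq_nhds (by omega) hx hxC)
end
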